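/- Let 0 < m1 ≤ m2 ≤ m3 with m1 + m2 + m3 = 1, and let m2 ≤ α ≤ min(m1 + m2, m3). Then the three-dimensional Lebesgue measure of the cut region S(α) = {x ∈ [0,1]³ : m1·x1 + m2·x2 + m3·x3 ≤ α} equals (α³ − (α − m1)³ − (α − m2)³)/(6·m1·m2·m3). -/

import Mathlib

open MeasureTheory

lemma hasDerivAt_maxpow (n : ℕ) (hn : 1 ≤ n) (a : ℝ) :
    HasDerivAt (fun u : ℝ => max 0 u ^ (n + 1)) (((n : ℝ) + 1) * max 0 a ^ n) a := by
  rcases lt_trichotomy a 0 with h | h | h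
  · have heq : (fun u : ℝ => max 0 u ^ (n + 1)) =ᶠ[nhds a] fun _ => (0:ℝ) := by
      filter_upwards [Iio_mem_nhds h] with u hu
      simp [max_eq_left (le_of_lt (Set.mem_Iio.mp hu))]
    rw [max_eq_left h.le, zero_pow (by omega), mul_zero]
    exact (hasDerivAt_const a 0).congr_of_eventuallyEq heq
  · subst h
    rw [max_self, zero_pow (by omega), mul_zero]
    rw [hasDerivAt_iff_isLittleO]
    simp only [sub_zero, smul_zero, max_self, zero_pow (by omega : n + 1 ≠ 0), sub_zero]
    rw [Asymptotics.isLittleO_iff]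
    intro c hc
    filter_upwards [Metric.ball_mem_nhds 0 (lt_min hc one_pos)] with x hx
    rw [Metric.mem_ball, Real.dist_eq, sub_zero] at hx
    have h1 : |x| ≤ 1 := le_of_lt (lt_of_lt_of_le hx (min_le_right _ _))
    have h2 : |x| ≤ c := le_of_lt (lt_of_lt_of_le hx (min_le_left _ _))
    have hmx : |max 0 x| ≤ |x| := by
      rcases le_total x 0 with hx0 | hx0
      · simp [max_eq_left hx0, abs_nonneg]
      · simp [max_eq_right hx0]
    rw [Real.norm_eq_abs, Real.norm_eq_abs, abs_pow]
    calc |max 0 x| ^ (n + 1) ≤ |x| ^ (n + 1) := by gcongr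
      _ = |x| ^ n * |x| := by ring
      _ ≤ c * |x| := by
          have : |x| ^ n ≤ |x| ^ 1 := pow_le_pow_of_le_one (abs_nonneg x) h1 hn
          rw [pow_one] at this
          exact mul_le_mul (this.trans h2) le_rfl (abs_nonneg x) ((abs_nonneg x).trans h2)
  · have heq : (fun u : ℝ => max 0 u ^ (n + 1)) =ᶠ[nhds a] fun u => u ^ (n + 1) := by
      filter_upwards [Ioi_mem_nhds h] with u hu
      simp [max_eq_right (le_of_lt (Set.mem_Ioi.mp hu))]
    rw [max_eq_right h.le]
    have := hasDerivAt_pow (n + 1) a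
    simp only [Nat.add_sub_cancel] at this
    exact (this.congr_of_eventuallyEq heq).congr_deriv (by push_cast; ring)

lemma integral_max_lin (b c : ℝ) (hb : 0 < b) :
    ∫ y in (0:ℝ)..1, max 0 (c - b * y) =
      (max 0 c ^ 2 - max 0 (c - b) ^ 2) / (2 * b) := by
  have hder : ∀ y ∈ Set.uIcc (0:ℝ) 1,
      HasDerivAt (fun y : ℝ => -max 0 (c - b * y) ^ 2 / (2 * b)) (max 0 (c - b * y)) y := by
    intro y _
    have h1 : HasDerivAt (fun y : ℝ => c - b * y) (-b) y := by
      simpa using ((hasDerivAt_id y).const_mul b).const_sub c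
    have h2 := (hasDerivAt_maxpow 1 le_rfl (c - b * y)).comp y h1
    have h3 := (h2.div_const (2 * b)).neg
    convert h3 using 1
    · rfl
    · rfl
    · ext t; simp [Function.comp, neg_div]
    · field_simp
      ring
  have hcont : IntervalIntegrable (fun y => max 0 (c - b * y)) volume 0 1 :=
    (continuous_const.max (continuous_const.sub (continuous_const.mul continuous_id))).intervalIntegrable 0 1
  rw [intervalIntegral.integral_eq_sub_of_hasDerivAt hder hcont]
  simp only [mul_one, mul_zero, sub_zero]
  ring

lemma integral_outer (b c d : ℝ) (hb : 0 < b) :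
    ∫ x in (0:ℝ)..1, ((c - b * x) ^ 2 - max 0 (c - b * x - d) ^ 2) =
      (c ^ 3 - (c - b) ^ 3 - max 0 (c - d) ^ 3 + max 0 (c - b - d) ^ 3) / (3 * b) := by
  have hder : ∀ x ∈ Set.uIcc (0:ℝ) 1,
      HasDerivAt (fun x : ℝ => (max 0 (c - b * x - d) ^ 3 - (c - b * x) ^ 3) / (3 * b))
        ((c - b * x) ^ 2 - max 0 (c - b * x - d) ^ 2) x := by
    intro x _
    have h1 : HasDerivAt (fun x : ℝ => c - b * x - d) (-b) x := by
      simpa using (((hasDerivAt_id x).const_mul b).const_sub c).sub_const d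
    have h1' : HasDerivAt (fun x : ℝ => c - b * x) (-b) x := by
      simpa using ((hasDerivAt_id x).const_mul b).const_sub c
    have h2 := (hasDerivAt_maxpow 2 (by norm_num) (c - b * x - d)).comp x h1
    have h3 := h1'.pow 3
    have h4 := (h2.sub h3).div_const (3 * b)
    convert h4 using 1
    all_goals first
      | (ext t; simp [Function.comp, sub_div])
      | (push_cast; field_simp; ring)
  have hcont : IntervalIntegrable (fun x => ((c - b * x) ^ 2 - max 0 (c - b * x - d) ^ 2)) volume 0 1 := by
    apply Continuous.intervalIntegrable
    have hlin : Continuous fun x : ℝ => c - b * x := continuous_const.sub (continuous_const.mul continuous_id)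
    exact (hlin.pow 2).sub ((continuous_const.max (hlin.sub continuous_const)).pow 2)
  rw [intervalIntegral.integral_eq_sub_of_hasDerivAt hder hcont]
  simp only [mul_one, mul_zero, sub_zero]
  ring

/-- Configuration 3 (pentagon cut interface): volume of the cut region of the
unit cube when `m2 ≤ α ≤ min (m1 + m2) m3`. -/
theorem cut_volume_config3 (m1 m2 m3 α : ℝ)
    (hm1 : 0 < m1) (hm12 : m1 ≤ m2) (hm23 : m2 ≤ m3)
    (hsum : m1 + m2 + m3 = 1) (hα0 : m2 ≤ α) (hα1 : α ≤ min (m1 + m2) m3) :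
    volume {p : ℝ × ℝ × ℝ | p.1 ∈ Set.Icc 0 1 ∧ p.2.1 ∈ Set.Icc 0 1 ∧
        p.2.2 ∈ Set.Icc 0 1 ∧ m1 * p.1 + m2 * p.2.1 + m3 * p.2.2 ≤ α} =
      ENNReal.ofReal ((α ^ 3 - (α - m1) ^ 3 - (α - m2) ^ 3) / (6 * m1 * m2 * m3)) := by
  have hm2 : (0:ℝ) < m2 := hm1.trans_le hm12
  have hm3 : (0:ℝ) < m3 := hm2.trans_le hm23
  have hαm3 : α ≤ m3 := le_trans hα1 (min_le_right _ _)
  have hα12 : α ≤ m1 + m2 := le_trans hα1 (min_le_left _ _)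
  set F : ℝ → ℝ := fun x => ((α - m1 * x) ^ 2 - max 0 (α - m1 * x - m2) ^ 2) / (2 * m2 * m3)
    with hF
  set S : Set (ℝ × ℝ × ℝ) := {p : ℝ × ℝ × ℝ | p.1 ∈ Set.Icc 0 1 ∧ p.2.1 ∈ Set.Icc 0 1 ∧
      p.2.2 ∈ Set.Icc 0 1 ∧ m1 * p.1 + m2 * p.2.1 + m3 * p.2.2 ≤ α} with hSdef
  have hSm : MeasurableSet S := by
    apply MeasurableSet.inter
    · exact measurable_fst measurableSet_Icc
    apply MeasurableSet.inter
    · exact (measurable_fst.comp measurable_snd) measurableSet_Icc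
    apply MeasurableSet.inter
    · exact (measurable_snd.comp measurable_snd) measurableSet_Icc
    · exact measurableSet_le (((measurable_fst.const_mul m1).add
        (measurable_snd.fst.const_mul m2)).add (measurable_snd.snd.const_mul m3))
        measurable_const
  -- step 1: Fubini
  have step1 : volume S = ∫⁻ x, (volume : Measure (ℝ × ℝ)) (Prod.mk x ⁻¹' S) := by
    rw [Measure.volume_eq_prod]
    exact Measure.prod_apply hSm
  -- key fiber computation
  have key : ∀ x : ℝ, (volume : Measure (ℝ × ℝ)) (Prod.mk x ⁻¹' S) =
      Set.indicator (Set.Icc 0 1) (fun x => ENNReal.ofReal (F x)) x := by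
    intro x
    by_cases hx : x ∈ Set.Icc (0:ℝ) 1
    · rw [Set.indicator_of_mem hx]
      set T : Set (ℝ × ℝ) := {q : ℝ × ℝ | q.1 ∈ Set.Icc (0:ℝ) 1 ∧ q.2 ∈ Set.Icc (0:ℝ) 1 ∧
          m1 * x + m2 * q.1 + m3 * q.2 ≤ α} with hTdef
      have hpre : Prod.mk x ⁻¹' S = T := by
        ext q
        simp only [Set.mem_preimage, hSdef, Set.mem_setOf_eq, hTdef, hx, true_and]
      rw [hpre]
      have hTm : MeasurableSet T := by
        apply MeasurableSet.inter
        · exact measurable_fst measurableSet_Icc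
        apply MeasurableSet.inter
        · exact measurable_snd measurableSet_Icc
        · exact measurableSet_le ((measurable_const.add
            (measurable_fst.const_mul m2)).add (measurable_snd.const_mul m3)) measurable_const
      have step2 : (volume : Measure (ℝ × ℝ)) T = ∫⁻ y, volume (Prod.mk y ⁻¹' T) := by
        rw [Measure.volume_eq_prod]
        exact Measure.prod_apply hTm
      have key2 : ∀ y : ℝ, (volume : Measure ℝ) (Prod.mk y ⁻¹' T) =
          Set.indicator (Set.Icc 0 1)
            (fun y => ENNReal.ofReal (max 0 (α - m1 * x - m2 * y) / m3)) y := by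
        intro y
        by_cases hy : y ∈ Set.Icc (0:ℝ) 1
        · rw [Set.indicator_of_mem hy]
          have hset : Prod.mk y ⁻¹' T = Set.Icc 0 (min 1 ((α - m1 * x - m2 * y) / m3)) := by
            ext z
            constructor
            · rintro ⟨-, ⟨hz0, hz1⟩, hlin⟩
              exact Set.mem_Icc.2 ⟨hz0, le_min hz1 (by rw [le_div_iff₀ hm3]; linarith)⟩
            · intro hz
              obtain ⟨hz0, hz1⟩ := Set.mem_Icc.1 hz
              have h1 : z ≤ 1 := hz1.trans (min_le_left _ _)
              have h2 : z ≤ (α - m1 * x - m2 * y) / m3 := hz1.trans (min_le_right _ _)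
              rw [le_div_iff₀ hm3] at h2
              exact ⟨hy, ⟨hz0, h1⟩, by linarith⟩
          rw [hset, Real.volume_Icc, sub_zero]
          have hcle : α - m1 * x - m2 * y ≤ m3 := by
            nlinarith [hx.1, hx.2, hy.1, hy.2]
          rcases le_total (α - m1 * x - m2 * y) 0 with hc | hc
          · rw [min_eq_right ((div_le_one hm3).2 hcle), max_eq_left hc, zero_div,
              ENNReal.ofReal_zero, ENNReal.ofReal_eq_zero]
            exact div_nonpos_of_nonpos_of_nonneg hc hm3.le
          · rw [max_eq_right hc, min_eq_right ((div_le_one hm3).2 hcle)]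
        · rw [Set.indicator_of_notMem hy]
          have : Prod.mk y ⁻¹' T = ∅ := by
            ext z
            simp only [Set.mem_preimage, hTdef, Set.mem_setOf_eq, Set.mem_empty_iff_false,
              iff_false]
            intro h
            exact hy h.1
          simp [this]
      rw [step2, lintegral_congr key2, lintegral_indicator measurableSet_Icc]
      have hcontg : Continuous fun y : ℝ => max 0 (α - m1 * x - m2 * y) / m3 := by
        apply Continuous.div_const
        exact continuous_const.max ((continuous_const.sub (continuous_const.mul continuous_id)))
      have hnn : 0 ≤ᵐ[volume.restrict (Set.Icc (0:ℝ) 1)]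
          fun y : ℝ => max 0 (α - m1 * x - m2 * y) / m3 := by
        filter_upwards with y
        positivity
      rw [← ofReal_integral_eq_lintegral_ofReal (hcontg.integrableOn_Icc) hnn]
      congr 1
      rw [MeasureTheory.integral_Icc_eq_integral_Ioc,
        ← intervalIntegral.integral_of_le (zero_le_one)]
      rw [intervalIntegral.integral_div, integral_max_lin m2 (α - m1 * x) hm2]
      have hc0 : (0:ℝ) ≤ α - m1 * x := by nlinarith [hx.1, hx.2]
      rw [max_eq_right hc0, hF, div_div]
    · rw [Set.indicator_of_notMem hx]
      have : Prod.mk x ⁻¹' S = ∅ := by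
        ext q
        simp only [Set.mem_preimage, hSdef, Set.mem_setOf_eq, Set.mem_empty_iff_false, iff_false]
        intro h
        exact hx h.1
      simp [this]
  rw [step1, lintegral_congr key, lintegral_indicator measurableSet_Icc]
  have hlin : Continuous fun x : ℝ => α - m1 * x := continuous_const.sub
    (continuous_const.mul continuous_id)
  have hFcont : Continuous F := by
    apply Continuous.div_const
    exact (hlin.pow 2).sub ((continuous_const.max (hlin.sub continuous_const)).pow 2)
  have hFnn : 0 ≤ᵐ[volume.restrict (Set.Icc (0:ℝ) 1)] F := by
    filter_upwards [ae_restrict_mem measurableSet_Icc] with x hx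
    have hc0 : (0:ℝ) ≤ α - m1 * x := by nlinarith [hx.1, hx.2]
    have h2 : max 0 (α - m1 * x - m2) ≤ α - m1 * x := max_le hc0 (by linarith)
    have h3 : max 0 (α - m1 * x - m2) ^ 2 ≤ (α - m1 * x) ^ 2 :=
      pow_le_pow_left₀ (le_max_left 0 _) h2 2
    rw [hF]
    apply div_nonneg (by linarith) (by positivity)
  rw [← ofReal_integral_eq_lintegral_ofReal (hFcont.integrableOn_Icc) hFnn]
  congr 1
  rw [MeasureTheory.integral_Icc_eq_integral_Ioc,
    ← intervalIntegral.integral_of_le (zero_le_one)]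
  rw [hF]
  rw [intervalIntegral.integral_div, integral_outer m1 α m2 hm1]
  rw [max_eq_right (by linarith : (0:ℝ) ≤ α - m2), max_eq_left (by linarith : α - m1 - m2 ≤ 0)]
  rw [div_div]
  congr 1
  · norm_num
  · ring
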